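/- Let G be any graph obtained from the complete bipartite graph K_{2,3} by applying a finite sequence of 2-leaf support vertex additions. Then G has maximum degree 3 and satisfies Z(G) = β(G) + 1; that is, every graph in this family attains equality in the bound Z(G) ≤ β(G) + 1 for connected graphs with maximum degree 3. -/

import Mathlib

open SimpleGraph

namespace ZFPaper

variable {V : Type*} {W : Type*}

/-- The degree of a vertex, as the cardinality of its neighbor set. -/
noncomputable def degSet (G : SimpleGraph V) (v : V) : ℕ := (G.neighborSet v).ncard

/-- The maximum degree of a graph. -/
noncomputable def maxDeg (G : SimpleGraph V) : ℕ := sSup {d : ℕ | ∃ v, degSet G v = d}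

/-- The minimum degree of a graph. -/
noncomputable def minDeg (G : SimpleGraph V) : ℕ := sInf {d : ℕ | ∃ v, degSet G v = d}

/-- A set of vertices is a vertex cover if every edge has an endpoint in it. -/
def IsVC (G : SimpleGraph V) (C : Set V) : Prop :=
  ∀ ⦃u w : V⦄, G.Adj u w → u ∈ C ∨ w ∈ C

/-- The vertex cover number β(G). -/
noncomputable def vcNum (G : SimpleGraph V) : ℕ :=
  sInf {m : ℕ | ∃ C : Set V, IsVC G C ∧ C.ncard = m}

/-- A set of vertices is independent if its vertices are pairwise non-adjacent. -/
def IsIndep (G : SimpleGraph V) (S : Set V) : Prop :=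
  ∀ ⦃u : V⦄, u ∈ S → ∀ ⦃w : V⦄, w ∈ S → ¬ G.Adj u w

/-- The independence number α(G). -/
noncomputable def indepNum (G : SimpleGraph V) : ℕ :=
  sSup {m : ℕ | ∃ S : Set V, IsIndep G S ∧ S.ncard = m}

/-- `Forced G B v` means that, starting from the blue set `B`, the vertex `v` is
eventually colored blue by the zero forcing process: a blue vertex with a unique
white neighbor forces that neighbor to become blue. -/
inductive Forced (G : SimpleGraph V) (B : Set V) : V → Prop
  | init : ∀ v ∈ B, Forced G B v
  | force : ∀ u w : V, Forced G B u → G.Adj u w →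
      (∀ x : V, G.Adj u x → x ≠ w → Forced G B x) → Forced G B w

/-- A zero forcing set: iterating the forcing process colors every vertex blue. -/
def IsZFS (G : SimpleGraph V) (B : Set V) : Prop := ∀ v : V, Forced G B v

/-- The zero forcing number Z(G). -/
noncomputable def zfNum (G : SimpleGraph V) : ℕ :=
  sInf {m : ℕ | ∃ B : Set V, IsZFS G B ∧ B.ncard = m}

/-- A graph is claw-free if it has no induced `K_{1,3}`. -/
def ClawFree (G : SimpleGraph V) : Prop :=
  ¬ ∃ (v a b c : V), G.Adj v a ∧ G.Adj v b ∧ G.Adj v c ∧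
      a ≠ b ∧ a ≠ c ∧ b ≠ c ∧ ¬ G.Adj a b ∧ ¬ G.Adj a c ∧ ¬ G.Adj b c

/-- The join `G ∨ H` of two graphs: disjoint union plus all edges between the parts. -/
def joinG (G : SimpleGraph V) (H : SimpleGraph W) : SimpleGraph (V ⊕ W) where
  Adj a b :=
    (∃ u v, a = Sum.inl u ∧ b = Sum.inl v ∧ G.Adj u v) ∨
    (∃ u v, a = Sum.inr u ∧ b = Sum.inr v ∧ H.Adj u v) ∨
    (∃ u v, a = Sum.inl u ∧ b = Sum.inr v) ∨
    (∃ u v, a = Sum.inr u ∧ b = Sum.inl v)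
  symm := by
    constructor
    rintro a b (⟨u, v, rfl, rfl, h⟩ | ⟨u, v, rfl, rfl, h⟩ | ⟨u, v, rfl, rfl⟩ | ⟨u, v, rfl, rfl⟩)
    · exact Or.inl ⟨v, u, rfl, rfl, h.symm⟩
    · exact Or.inr (Or.inl ⟨v, u, rfl, rfl, h.symm⟩)
    · exact Or.inr (Or.inr (Or.inr ⟨v, u, rfl, rfl⟩))
    · exact Or.inr (Or.inr (Or.inl ⟨v, u, rfl, rfl⟩))
  loopless := by
    constructor
    rintro a (⟨u, v, rfl, h, hadj⟩ | ⟨u, v, rfl, h, hadj⟩ | ⟨u, v, rfl, h⟩ | ⟨u, v, rfl, h⟩) <;>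
      simp_all

/-- The graph obtained from `G` by a `k`-leaf support vertex addition at `v`:
a new support vertex `w = Sum.inr none` is attached to `v`, and `k` new leaves
`Sum.inr (some i)` are attached to `w`. -/
def lsva (G : SimpleGraph V) (v : V) (k : ℕ) : SimpleGraph (V ⊕ Option (Fin k)) where
  Adj a b :=
    (∃ x y, a = Sum.inl x ∧ b = Sum.inl y ∧ G.Adj x y) ∨
    (a = Sum.inl v ∧ b = Sum.inr none) ∨
    (a = Sum.inr none ∧ b = Sum.inl v) ∨
    (∃ i : Fin k, a = Sum.inr none ∧ b = Sum.inr (some i)) ∨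
    (∃ i : Fin k, a = Sum.inr (some i) ∧ b = Sum.inr none)
  symm := by
    constructor
    rintro a b (⟨x, y, rfl, rfl, h⟩ | ⟨rfl, rfl⟩ | ⟨rfl, rfl⟩ | ⟨i, rfl, rfl⟩ | ⟨i, rfl, rfl⟩)
    · exact Or.inl ⟨y, x, rfl, rfl, h.symm⟩
    · exact Or.inr (Or.inr (Or.inl ⟨rfl, rfl⟩))
    · exact Or.inr (Or.inl ⟨rfl, rfl⟩)
    · exact Or.inr (Or.inr (Or.inr (Or.inr ⟨i, rfl, rfl⟩)))
    · exact Or.inr (Or.inr (Or.inr (Or.inl ⟨i, rfl, rfl⟩)))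
  loopless := by
    constructor
    rintro a (⟨x, y, rfl, h, hadj⟩ | ⟨rfl, h⟩ | ⟨rfl, h⟩ | ⟨i, rfl, h⟩ | ⟨i, rfl, h⟩) <;> simp_all

/-- `LSVAChain m G H` means `H` is obtained from `G` by a finite sequence of
`m`-leaf support vertex additions (each applied at a vertex of degree at most `m-1`). -/
inductive LSVAChain (m : ℕ) : {α : Type} → SimpleGraph α → {β : Type} → SimpleGraph β → Prop
  | refl {α : Type} (G : SimpleGraph α) : LSVAChain m G G
  | step {α : Type} {G : SimpleGraph α} {β : Type} {H : SimpleGraph β} (v : β)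
      (hv : (H.neighborSet v).ncard ≤ m - 1) :
      LSVAChain m G H → LSVAChain m G (lsva H v m)

/-- The graph obtained from the complete graph `K_n` by attaching one pendant
vertex to each vertex in the set `A`. -/
def pendantKn (n : ℕ) (A : Finset (Fin n)) : SimpleGraph (Fin n ⊕ {a : Fin n // a ∈ A}) where
  Adj a b :=
    (∃ x y : Fin n, a = Sum.inl x ∧ b = Sum.inl y ∧ x ≠ y) ∨
    (∃ p : {a : Fin n // a ∈ A}, a = Sum.inl p.1 ∧ b = Sum.inr p) ∨
    (∃ p : {a : Fin n // a ∈ A}, a = Sum.inr p ∧ b = Sum.inl p.1)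
  symm := by
    constructor
    rintro a b (⟨x, y, rfl, rfl, h⟩ | ⟨p, rfl, rfl⟩ | ⟨p, rfl, rfl⟩)
    · exact Or.inl ⟨y, x, rfl, rfl, h.symm⟩
    · exact Or.inr (Or.inr ⟨p, rfl, rfl⟩)
    · exact Or.inr (Or.inl ⟨p, rfl, rfl⟩)
  loopless := by
    constructor
    rintro a (⟨x, y, rfl, h, hne⟩ | ⟨p, rfl, h⟩ | ⟨p, rfl, h⟩) <;> simp_all

/-- The graph obtained from a cycle `C_k` with vertices `v_1, …, v_k` (the `Sum.inl`
vertices) together with disjoint complete graphs `K_{n i}` (the `Sum.inr` vertices),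
where every vertex of the `i`-th complete graph is joined to both `v_i` and `v_{i+1}`
(indices mod `k`). -/
def cycleCliques (k : ℕ) (n : Fin k → ℕ) :
    SimpleGraph (Fin k ⊕ Σ i : Fin k, Fin (n i)) where
  Adj a b :=
    match a, b with
    | Sum.inl i, Sum.inl j =>
        i ≠ j ∧ ((j : ℕ) = ((i : ℕ) + 1) % k ∨ (i : ℕ) = ((j : ℕ) + 1) % k)
    | Sum.inl j, Sum.inr s => (j : ℕ) = (s.1 : ℕ) ∨ (j : ℕ) = ((s.1 : ℕ) + 1) % k
    | Sum.inr s, Sum.inl j => (j : ℕ) = (s.1 : ℕ) ∨ (j : ℕ) = ((s.1 : ℕ) + 1) % k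
    | Sum.inr s, Sum.inr t => s ≠ t ∧ s.1 = t.1
  symm := by
    constructor
    rintro (i | s) (j | t) h
    · exact ⟨Ne.symm h.1, h.2.symm⟩
    · exact h
    · exact h
    · exact ⟨Ne.symm h.1, h.2.symm⟩
  loopless := by
    constructor
    rintro (i | s) h
    · exact h.1 rfl
    · exact h.1 rfl



/-! An `m`-leaf support vertex addition at `v` raises `β` by one (the support vertex covers the
new edges) and, for `m ≥ 2`, raises `Z` by `m - 1`: the new leaves are non-adjacent twins, and of
two such twins one must start blue; conversely, a zero forcing set of `G` plus all leaves but one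
first forces the support vertex and then runs as in `G`. For `m = 2` this keeps `Z - β`, and the
maximum degree 3 of `K_{2,3}`, unchanged along the chain, and `K_{2,3}` has `Z = 3`, `β = 2`. -/

section Cardinality

variable {α β : Type*}

lemma ncard_eq_ncard_preimage_inl_add_ncard_preimage_inr {s : Set (α ⊕ β)} (hs : s.Finite) :
    s.ncard = (Sum.inl ⁻¹' s).ncard + (Sum.inr ⁻¹' s).ncard := by
  have hsplit : s = Sum.inl '' (Sum.inl ⁻¹' s) ∪ Sum.inr '' (Sum.inr ⁻¹' s) := by
    ext (a | b) <;> simp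
  have hl : (Sum.inl '' (Sum.inl ⁻¹' s)).Finite := hs.subset (Set.image_preimage_subset _ _)
  have hr : (Sum.inr '' (Sum.inr ⁻¹' s)).Finite := hs.subset (Set.image_preimage_subset _ _)
  conv_lhs => rw [hsplit]
  rw [Set.ncard_union_eq Set.disjoint_image_inl_image_inr hl hr,
    Set.ncard_image_of_injective _ Sum.inl_injective,
    Set.ncard_image_of_injective _ Sum.inr_injective]

lemma card_le_ncard_add_one_of_mem_or_mem [Finite α] {s : Set α}
    (h : ∀ i j, i ≠ j → i ∈ s ∨ j ∈ s) : Nat.card α ≤ s.ncard + 1 := by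
  by_cases hs : s = Set.univ
  · rw [hs, Set.ncard_univ]
    omega
  obtain ⟨i, hi⟩ := (Set.ne_univ_iff_exists_notMem s).mp hs
  have hcompl : {i}ᶜ ⊆ s := fun j hj => (h i j (Ne.symm hj)).resolve_left hi
  have := Set.ncard_le_ncard hcompl
  rw [Set.ncard_compl, Set.ncard_singleton] at this
  omega

end Cardinality

section Invariants

variable {G : SimpleGraph V}

lemma zfNum_le_ncard {B : Set V} (hB : IsZFS G B) : zfNum G ≤ B.ncard :=
  Nat.sInf_le ⟨B, hB, rfl⟩

lemma exists_isZFS_ncard_eq_zfNum [Finite V] (G : SimpleGraph V) :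
    ∃ B, IsZFS G B ∧ B.ncard = zfNum G :=
  Nat.sInf_mem (s := {m | ∃ B : Set V, IsZFS G B ∧ B.ncard = m})
    ⟨_, Set.univ, fun v => Forced.init v trivial, rfl⟩

lemma vcNum_le_ncard {C : Set V} (hC : IsVC G C) : vcNum G ≤ C.ncard :=
  Nat.sInf_le ⟨C, hC, rfl⟩

lemma exists_isVC_ncard_eq_vcNum [Finite V] (G : SimpleGraph V) :
    ∃ C, IsVC G C ∧ C.ncard = vcNum G :=
  Nat.sInf_mem (s := {m | ∃ C : Set V, IsVC G C ∧ C.ncard = m})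
    ⟨_, Set.univ, fun _ _ _ => Or.inl trivial, rfl⟩

lemma degSet_le_maxDeg [Finite V] (G : SimpleGraph V) (u : V) : degSet G u ≤ maxDeg G := by
  refine le_csSup ⟨Nat.card V, ?_⟩ ⟨u, rfl⟩
  rintro d ⟨x, rfl⟩
  exact Set.ncard_le_card _

lemma exists_degSet_eq_maxDeg [Finite V] [Nonempty V] (G : SimpleGraph V) :
    ∃ u, degSet G u = maxDeg G :=
  Nat.sSup_mem (Set.range_nonempty _) ⟨Nat.card V, by
    rintro d ⟨x, rfl⟩
    exact Set.ncard_le_card _⟩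

lemma maxDeg_eq_of_forall_le {n : ℕ} (hex : ∃ u, degSet G u = n)
    (hle : ∀ u, degSet G u ≤ n) : maxDeg G = n := by
  obtain ⟨u, hu⟩ := hex
  refine le_antisymm (csSup_le ⟨n, u, hu⟩ ?_) (hu ▸ le_csSup ⟨n, ?_⟩ ⟨u, rfl⟩) <;>
    rintro d ⟨x, rfl⟩ <;> exact hle x

/- Whoever forces `x` also sees `y`, which must therefore be blue already. -/
lemma Forced.mem_or_mem_of_neighborSet_eq {B : Set V} {x : V} (hx : Forced G B x) :
    ∀ {y}, G.neighborSet x = G.neighborSet y → x ≠ y → x ∈ B ∨ y ∈ B := by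
  induction hx with
  | init x hx => exact fun _ _ => Or.inl hx
  | force u x _ hux _ _ ih =>
    intro y hxy hne
    have huy : G.Adj u y := (show u ∈ G.neighborSet y from hxy ▸ hux.symm).symm
    exact (ih y huy hne.symm hxy.symm hne.symm).symm

end Invariants

section LSVA

variable {G : SimpleGraph V} {v : V} {k : ℕ}

@[simp] lemma lsva_adj_inl_inl {a b : V} :
    (lsva G v k).Adj (Sum.inl a) (Sum.inl b) ↔ G.Adj a b := by
  simp [lsva]

@[simp] lemma lsva_adj_inl_inr {a : V} {o : Option (Fin k)} :
    (lsva G v k).Adj (Sum.inl a) (Sum.inr o) ↔ a = v ∧ o = none := by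
  simp [lsva]

@[simp] lemma lsva_adj_inr_inl {a : V} {o : Option (Fin k)} :
    (lsva G v k).Adj (Sum.inr o) (Sum.inl a) ↔ a = v ∧ o = none := by
  simp [lsva, and_comm]

@[simp] lemma lsva_adj_inr_inr {o o' : Option (Fin k)} :
    (lsva G v k).Adj (Sum.inr o) (Sum.inr o') ↔
      (o = none ∧ o'.isSome) ∨ (o' = none ∧ o.isSome) := by
  cases o <;> cases o' <;> simp [lsva]

lemma neighborSet_lsva_inl_of_ne {u : V} (h : u ≠ v) :
    (lsva G v k).neighborSet (Sum.inl u) = Sum.inl '' G.neighborSet u := by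
  ext (b | o) <;> simp [h]

lemma neighborSet_lsva_inl_self :
    (lsva G v k).neighborSet (Sum.inl v) =
      insert (Sum.inr none) (Sum.inl '' G.neighborSet v) := by
  ext (b | o) <;> simp

lemma neighborSet_lsva_inr_none :
    (lsva G v k).neighborSet (Sum.inr none) =
      insert (Sum.inl v) (Set.range (Sum.inr ∘ some)) := by
  ext (b | _ | j) <;> simp [eq_comm]

lemma neighborSet_lsva_inr_some (i : Fin k) :
    (lsva G v k).neighborSet (Sum.inr (some i)) = {Sum.inr none} := by
  ext (b | _ | j) <;> simp

lemma degSet_lsva_inr_none : degSet (lsva G v k) (Sum.inr none) = k + 1 := by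
  rw [degSet, neighborSet_lsva_inr_none, Set.ncard_insert_of_notMem (by simp),
    Set.ncard_range_of_injective (Sum.inr_injective.comp (Option.some_injective _)), Nat.card_fin]

lemma maxDeg_lsva [Finite V] (hv : degSet G v < maxDeg G) (hk : k + 1 ≤ maxDeg G) :
    maxDeg (lsva G v k) = maxDeg G := by
  have : Nonempty V := ⟨v⟩
  obtain ⟨u, hu⟩ := exists_degSet_eq_maxDeg G
  have huv : u ≠ v := by rintro rfl; omega
  refine maxDeg_eq_of_forall_le ⟨Sum.inl u, ?_⟩ ?_
  · rw [degSet, neighborSet_lsva_inl_of_ne huv, Set.ncard_image_of_injective _ Sum.inl_injective]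
    exact hu
  rintro (u | _ | i)
  · by_cases huv : u = v
    · subst huv
      rw [degSet, neighborSet_lsva_inl_self, Set.ncard_insert_of_notMem (by simp),
        Set.ncard_image_of_injective _ Sum.inl_injective]
      exact hv
    · rw [degSet, neighborSet_lsva_inl_of_ne huv, Set.ncard_image_of_injective _ Sum.inl_injective]
      exact degSet_le_maxDeg G u
  · rwa [degSet_lsva_inr_none]
  · rw [degSet, neighborSet_lsva_inr_some, Set.ncard_singleton]
    omega

lemma isVC_lsva {C : Set V} (hC : IsVC G C) :
    IsVC (lsva G v k) (insert (Sum.inr none) (Sum.inl '' C)) := by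
  rintro (a | _ | i) (b | _ | j) hadj <;> simp_all [IsVC]

lemma IsVC.preimage_inl {C : Set (V ⊕ Option (Fin k))} (hC : IsVC (lsva G v k) C) :
    IsVC G (Sum.inl ⁻¹' C) :=
  fun _ _ hadj => hC (lsva_adj_inl_inl.mpr hadj)

lemma vcNum_lsva [Finite V] (hk : 1 ≤ k) : vcNum (lsva G v k) = vcNum G + 1 := by
  apply le_antisymm
  · obtain ⟨C, hC, hcard⟩ := exists_isVC_ncard_eq_vcNum G
    calc vcNum (lsva G v k) ≤ (insert (Sum.inr none) (Sum.inl '' C)).ncard :=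
          vcNum_le_ncard (isVC_lsva hC)
      _ = vcNum G + 1 := by
        rw [Set.ncard_insert_of_notMem (by simp), Set.ncard_image_of_injective _ Sum.inl_injective,
          hcard]
  · obtain ⟨C, hC, hcard⟩ := exists_isVC_ncard_eq_vcNum (lsva G v k)
    have hw : (Sum.inr ⁻¹' C).Nonempty := by
      rcases hC (lsva_adj_inr_inr.mpr (Or.inl ⟨rfl, rfl⟩) : (lsva G v k).Adj
        (Sum.inr none) (Sum.inr (some ⟨0, hk⟩))) with h | h
      exacts [⟨_, h⟩, ⟨_, h⟩]
    have := (Set.ncard_pos (Set.toFinite _)).mpr hw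
    have := vcNum_le_ncard hC.preimage_inl
    rw [← hcard, ncard_eq_ncard_preimage_inl_add_ncard_preimage_inr C.toFinite]
    omega

/-- If some leaf starts white, it can only be forced by the support vertex, after `v` is blue;
so the support vertex can force `v` only when every leaf starts blue, and then `v` is put in the
restriction instead. -/
def lsvaRestrict (B : Set (V ⊕ Option (Fin k))) (v : V) : Set V :=
  Sum.inl ⁻¹' B ∪ {u | u = v ∧ ∀ i, Sum.inr (some i) ∈ B}

lemma forced_lsvaRestrict {B : Set (V ⊕ Option (Fin k))} {a : V ⊕ Option (Fin k)}
    (h : Forced (lsva G v k) B a) :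
    (∀ u, a = Sum.inl u → Forced G (lsvaRestrict B v) u) ∧
      ∀ i, a = Sum.inr (some i) → Sum.inr (some i) ∈ B ∨ Forced G (lsvaRestrict B v) v := by
  induction h with
  | init a ha =>
    refine ⟨?_, ?_⟩ <;> rintro _ rfl
    exacts [Forced.init _ (Or.inl ha), Or.inl ha]
  | force x a _ hxa _ ihx ih =>
    constructor
    · rintro u rfl
      rcases x with x | _ | i
      · refine Forced.force x u (ihx.1 x rfl) (lsva_adj_inl_inl.mp hxa) fun y hy hyu => ?_
        exact (ih (Sum.inl y) (lsva_adj_inl_inl.mpr hy) (by simpa using hyu)).1 y rfl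
      · obtain ⟨rfl, -⟩ := lsva_adj_inr_inl.mp hxa
        by_cases hall : ∀ i, Sum.inr (some i) ∈ B
        · exact Forced.init _ (Or.inr ⟨rfl, hall⟩)
        · obtain ⟨i, hi⟩ := not_forall.mp hall
          exact ((ih (Sum.inr (some i)) (by simp) (by simp)).2 i rfl).resolve_left hi
      · simp at hxa
    · rintro i rfl
      rcases x with x | _ | j
      · simp at hxa
      · exact Or.inr ((ih (Sum.inl v) (by simp) (by simp)).1 v rfl)
      · simp at hxa

lemma isZFS_lsvaRestrict {B : Set (V ⊕ Option (Fin k))} (hB : IsZFS (lsva G v k) B) :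
    IsZFS G (lsvaRestrict B v) :=
  fun u => (forced_lsvaRestrict (hB (Sum.inl u))).1 u rfl

lemma ncard_lsvaRestrict_add_le [Finite V] {B : Set (V ⊕ Option (Fin k))}
    (hB : IsZFS (lsva G v k) B) : (lsvaRestrict B v).ncard + k ≤ B.ncard + 1 := by
  set L : Set (Fin k) := {i | Sum.inr (some i) ∈ B}
  have hL : k ≤ L.ncard + 1 := by
    simpa using card_le_ncard_add_one_of_mem_or_mem (s := L) fun i j hij =>
      (hB _).mem_or_mem_of_neighborSet_eq
        (by rw [neighborSet_lsva_inr_some, neighborSet_lsva_inr_some]) (by simpa using hij)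
  have hLB : L.ncard ≤ (Sum.inr ⁻¹' B).ncard :=
    Set.ncard_le_ncard_of_injOn some (fun _ hi => hi) (Option.some_injective _).injOn
  have hsplit := ncard_eq_ncard_preimage_inl_add_ncard_preimage_inr B.toFinite
  by_cases hall : ∀ i, Sum.inr (some i) ∈ B
  · have hLk : L.ncard = k := by
      rw [show L = Set.univ from Set.eq_univ_of_forall hall, Set.ncard_univ, Nat.card_fin]
    have hsub : lsvaRestrict B v ⊆ insert v (Sum.inl ⁻¹' B) := by
      rintro u (hu | ⟨rfl, -⟩)
      exacts [Or.inr hu, Or.inl rfl]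
    have := (Set.ncard_le_ncard hsub).trans (Set.ncard_insert_le _ _)
    omega
  · have : lsvaRestrict B v = Sum.inl ⁻¹' B := by simp [lsvaRestrict, hall]
    rw [this]
    omega

lemma forced_lsva_inl {B : Set V} {B' : Set (V ⊕ Option (Fin k))} (hB : Sum.inl '' B ⊆ B')
    (hw : Forced (lsva G v k) B' (Sum.inr none)) {u : V} (h : Forced G B u) :
    Forced (lsva G v k) B' (Sum.inl u) := by
  induction h with
  | init u hu => exact Forced.init _ (hB ⟨u, hu, rfl⟩)
  | force x u _ hxu _ ihx ih =>
    refine Forced.force _ _ ihx (lsva_adj_inl_inl.mpr hxu) ?_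
    rintro (y | _ | i) hy hyu
    · exact ih y (lsva_adj_inl_inl.mp hy) (by simpa using hyu)
    · exact hw
    · simp at hy

lemma isZFS_lsva {B : Set V} (hB : IsZFS G B) {i j : Fin k} (hij : i ≠ j) :
    IsZFS (lsva G v k) (Sum.inl '' B ∪ Sum.inr '' (some '' {i}ᶜ)) := by
  set B' := Sum.inl '' B ∪ Sum.inr '' (some '' {i}ᶜ)
  have hleaf : ∀ l ≠ i, Forced (lsva G v k) B' (Sum.inr (some l)) :=
    fun l hl => Forced.init _ (Or.inr ⟨some l, ⟨l, hl, rfl⟩, rfl⟩)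
  have hw : Forced (lsva G v k) B' (Sum.inr none) :=
    Forced.force _ _ (hleaf j hij.symm) (by simp) (by rintro (y | _ | l) hy hne <;> simp_all)
  have hV : ∀ u, Forced (lsva G v k) B' (Sum.inl u) :=
    fun u => forced_lsva_inl Set.subset_union_left hw (hB u)
  rintro (u | _ | l)
  · exact hV u
  · exact hw
  · by_cases hl : l = i
    · subst hl
      refine Forced.force _ _ hw (by simp) ?_
      rintro (y | _ | l') hy hne
      · obtain ⟨rfl, -⟩ := lsva_adj_inr_inl.mp hy
        exact hV _
      · simp at hy
      · exact hleaf l' (by simpa using hne)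
    · exact hleaf l hl

lemma zfNum_lsva [Finite V] (hk : 2 ≤ k) : zfNum (lsva G v k) + 1 = zfNum G + k := by
  apply le_antisymm
  · obtain ⟨B, hB, hcard⟩ := exists_isZFS_ncard_eq_zfNum G
    let i₀ : Fin k := ⟨0, by omega⟩
    have hij : i₀ ≠ ⟨1, by omega⟩ := by simp [i₀]
    have hcard' : (Sum.inl '' B ∪ Sum.inr '' (some '' {i₀}ᶜ)).ncard = zfNum G + (k - 1) := by
      rw [Set.ncard_union_eq Set.disjoint_image_inl_image_inr,
        Set.ncard_image_of_injective _ Sum.inl_injective,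
        Set.ncard_image_of_injective _ Sum.inr_injective,
        Set.ncard_image_of_injective _ (Option.some_injective _), Set.ncard_compl,
        Set.ncard_singleton, Nat.card_fin, hcard]
    have := zfNum_le_ncard (isZFS_lsva (v := v) hB hij)
    omega
  · obtain ⟨B, hB, hcard⟩ := exists_isZFS_ncard_eq_zfNum (lsva G v k)
    have := zfNum_le_ncard (isZFS_lsvaRestrict hB)
    have := ncard_lsvaRestrict_add_le hB
    omega

end LSVA

section CompleteBipartite

variable {α β : Type*}

lemma neighborSet_completeBipartiteGraph_inl (a : α) :
    (completeBipartiteGraph α β).neighborSet (Sum.inl a) = Set.range Sum.inr := by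
  ext (a' | b) <;> simp

lemma neighborSet_completeBipartiteGraph_inr (b : β) :
    (completeBipartiteGraph α β).neighborSet (Sum.inr b) = Set.range Sum.inl := by
  ext (a | b') <;> simp

lemma maxDeg_completeBipartiteGraph [Nonempty α] [Nonempty β] :
    maxDeg (completeBipartiteGraph α β) = max (Nat.card α) (Nat.card β) := by
  have hl : ∀ a, degSet (completeBipartiteGraph α β) (Sum.inl a) = Nat.card β := fun a => by
    rw [degSet, neighborSet_completeBipartiteGraph_inl,
      Set.ncard_range_of_injective Sum.inr_injective]
  have hr : ∀ b, degSet (completeBipartiteGraph α β) (Sum.inr b) = Nat.card α := fun b => by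
    rw [degSet, neighborSet_completeBipartiteGraph_inr,
      Set.ncard_range_of_injective Sum.inl_injective]
  refine maxDeg_eq_of_forall_le ?_ ?_
  · rcases le_total (Nat.card α) (Nat.card β) with h | h
    · exact ⟨Sum.inl (Classical.arbitrary α), by rw [hl, max_eq_right h]⟩
    · exact ⟨Sum.inr (Classical.arbitrary β), by rw [hr, max_eq_left h]⟩
  · rintro (a | b)
    · exact (hl a).trans_le (le_max_right _ _)
    · exact (hr b).trans_le (le_max_left _ _)

lemma vcNum_completeBipartiteGraph [Finite α] [Finite β] :
    vcNum (completeBipartiteGraph α β) = min (Nat.card α) (Nat.card β) := by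
  apply le_antisymm
  · rcases le_total (Nat.card α) (Nat.card β) with h | h
    · have := vcNum_le_ncard (G := completeBipartiteGraph α β) (C := Set.range Sum.inl)
        (by rintro (a | b) (a' | b') hadj <;> simp_all)
      rwa [Set.ncard_range_of_injective Sum.inl_injective, ← min_eq_left h] at this
    · have := vcNum_le_ncard (G := completeBipartiteGraph α β) (C := Set.range Sum.inr)
        (by rintro (a | b) (a' | b') hadj <;> simp_all)
      rwa [Set.ncard_range_of_injective Sum.inr_injective, ← min_eq_right h] at this
  · obtain ⟨C, hC, hcard⟩ := exists_isVC_ncard_eq_vcNum (completeBipartiteGraph α β)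
    rw [← hcard]
    have hside : (∀ a, Sum.inl a ∈ C) ∨ ∀ b, Sum.inr b ∈ C := by
      by_contra! h
      obtain ⟨⟨a, ha⟩, b, hb⟩ := h
      exact (hC (show (completeBipartiteGraph α β).Adj (Sum.inl a) (Sum.inr b) by simp)).elim
        ha hb
    rcases hside with h | h
    · calc min (Nat.card α) (Nat.card β) ≤ Nat.card α := min_le_left _ _
        _ = (Set.range Sum.inl).ncard := (Set.ncard_range_of_injective Sum.inl_injective).symm
        _ ≤ C.ncard := Set.ncard_le_ncard (Set.range_subset_iff.mpr h)
    · calc min (Nat.card α) (Nat.card β) ≤ Nat.card β := min_le_right _ _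
        _ = (Set.range Sum.inr).ncard := (Set.ncard_range_of_injective Sum.inr_injective).symm
        _ ≤ C.ncard := Set.ncard_le_ncard (Set.range_subset_iff.mpr h)

lemma zfNum_completeBipartiteGraph [Finite α] [Finite β] [Nontrivial α] [Nonempty β] :
    zfNum (completeBipartiteGraph α β) + 2 = Nat.card α + Nat.card β := by
  apply le_antisymm
  · obtain ⟨a₀, a₁, ha⟩ := exists_pair_ne α
    obtain b₀ := Classical.arbitrary β
    set B : Set (α ⊕ β) := {Sum.inl a₀, Sum.inr b₀}ᶜ
    have hmem : ∀ x, x ≠ Sum.inl a₀ → x ≠ Sum.inr b₀ →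
        Forced (completeBipartiteGraph α β) B x :=
      fun x h₁ h₂ => Forced.init x (by simp [B, h₁, h₂])
    have hb₀ : Forced (completeBipartiteGraph α β) B (Sum.inr b₀) :=
      Forced.force (Sum.inl a₁) _ (hmem _ (by simpa using ha.symm) (by simp)) (by simp)
        fun x hx hne => hmem x (by rintro rfl; simp at hx) hne
    have ha₀ : Forced (completeBipartiteGraph α β) B (Sum.inl a₀) :=
      Forced.force _ _ hb₀ (by simp) fun x hx hne => hmem x hne (by rintro rfl; simp at hx)
    have hB : IsZFS (completeBipartiteGraph α β) B := fun x => by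
      by_cases h₁ : x = Sum.inl a₀
      · exact h₁ ▸ ha₀
      by_cases h₂ : x = Sum.inr b₀
      · exact h₂ ▸ hb₀
      exact hmem x h₁ h₂
    have := zfNum_le_ncard hB
    rw [Set.ncard_compl, Set.ncard_pair (by simp), Nat.card_sum] at this
    have := Finite.one_lt_card (α := α)
    have := Nat.card_pos (α := β)
    omega
  · obtain ⟨B, hB, hcard⟩ := exists_isZFS_ncard_eq_zfNum (completeBipartiteGraph α β)
    have hl := card_le_ncard_add_one_of_mem_or_mem (s := Sum.inl ⁻¹' B) fun a a' h =>
      (hB _).mem_or_mem_of_neighborSet_eq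
        (by rw [neighborSet_completeBipartiteGraph_inl, neighborSet_completeBipartiteGraph_inl])
        (by simpa using h)
    have hr := card_le_ncard_add_one_of_mem_or_mem (s := Sum.inr ⁻¹' B) fun b b' h =>
      (hB _).mem_or_mem_of_neighborSet_eq
        (by rw [neighborSet_completeBipartiteGraph_inr, neighborSet_completeBipartiteGraph_inr])
        (by simpa using h)
    rw [← hcard, ncard_eq_ncard_preimage_inl_add_ncard_preimage_inr B.toFinite]
    omega

end CompleteBipartite

namespace LSVAChain

variable {m : ℕ} {α β : Type} {G : SimpleGraph α} {H : SimpleGraph β}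

lemma finite [Finite α] (h : LSVAChain m G H) : Finite β := by
  induction h with
  | refl => infer_instance
  | step _ _ _ _ => infer_instance

lemma maxDeg_eq [Finite α] (h : LSVAChain m G H) (hm : m + 1 ≤ maxDeg G) :
    maxDeg H = maxDeg G := by
  induction h with
  | refl => rfl
  | step v hv h ih =>
    have := h.finite
    change degSet _ v ≤ m - 1 at hv
    rw [maxDeg_lsva (by omega) (by omega), ih]

lemma zfNum_add_vcNum_eq [Finite α] (h : LSVAChain m G H) (hm : 2 ≤ m) :
    zfNum H + (m - 1) * vcNum G = zfNum G + (m - 1) * vcNum H := by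
  induction h with
  | refl => rfl
  | @step _ H v hv h ih =>
    have := h.finite
    have := zfNum_lsva (G := H) (v := v) hm
    rw [vcNum_lsva (by omega), mul_add_one]
    omega

end LSVAChain

/-- Every graph obtained from `K_{2,3}` by a finite sequence of 2-leaf
support vertex additions has maximum degree 3 and satisfies `Z(G) = β(G) + 1`. -/
theorem stmt17 {V : Type} [Fintype V] (G : SimpleGraph V)
    (hG : LSVAChain 2 (completeBipartiteGraph (Fin 2) (Fin 3)) G) :
    maxDeg G = 3 ∧ zfNum G = vcNum G + 1 := by
  have hmax : maxDeg (completeBipartiteGraph (Fin 2) (Fin 3)) = 3 := by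
    simp [maxDeg_completeBipartiteGraph]
  have hzf : zfNum (completeBipartiteGraph (Fin 2) (Fin 3)) + 2 = 5 := by
    simpa using zfNum_completeBipartiteGraph (α := Fin 2) (β := Fin 3)
  have hvc : vcNum (completeBipartiteGraph (Fin 2) (Fin 3)) = 2 := by
    simp [vcNum_completeBipartiteGraph]
  have hinv := hG.zfNum_add_vcNum_eq le_rfl
  exact ⟨(hG.maxDeg_eq (by omega)).trans hmax, by omega⟩

end ZFPaper
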